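/- arXiv:1405.3678 — 2 statements merged into one kernel-verified Lean document; each statement's English description precedes it below -/
import Mathlib

section
/- Let T be a 3×3 unitary matrix such that the traces of T and of each T·Sⱼ are sums of roots of unity and det(T) is a root of unity. If |T_{kl} T_{lk}| = 1/4 for off-diagonal entries (k ≠ l), then T_{kl} T_{lk} = ξ'/4 for some root of unity ξ'. -/
/-!
Let `j` be the index other than `k` and `l`. Since `T` is unitary, `(T⁻¹) j j = conj (T j j)`,
and by the adjugate formula it is also the complementary `2 × 2` minor
`T k k * T l l - T k l * T l k` divided by `det T`. Every `2 * T i i = tr T + tr (T * S i)` is a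
sum of roots of unity, so this exhibits `4 * T k l * T l k` as one. It has absolute value `1`,
so by Kronecker's theorem it is a root of unity: in a cyclotomic field, which is CM, each of its
Galois conjugates times its complex conjugate is `1`, so all of them have absolute value `1`.
-/

def IsRootOfUnity (z : ℂ) : Prop := ∃ n : ℕ, 0 < n ∧ z ^ n = 1

def IsSumOfRootsOfUnity (z : ℂ) : Prop :=
  ∃ (m : ℕ) (f : Fin m → ℂ), (∀ i, IsRootOfUnity (f i)) ∧ z = ∑ i, f i

def S (j : Fin 3) : Matrix (Fin 3) (Fin 3) ℂ :=
  Matrix.diagonal (fun k => if k = j then 1 else -1)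

open scoped ComplexConjugate

theorem IsRootOfUnity.mul {z w : ℂ} (hz : IsRootOfUnity z) (hw : IsRootOfUnity w) :
    IsRootOfUnity (z * w) := by
  obtain ⟨n, hn, hzn⟩ := hz
  obtain ⟨m, hm, hwm⟩ := hw
  refine ⟨n * m, Nat.mul_pos hn hm, ?_⟩
  rw [mul_pow, pow_mul, hzn, one_pow, mul_comm n m, pow_mul, hwm, one_pow, one_mul]

theorem IsRootOfUnity.neg {z : ℂ} (hz : IsRootOfUnity z) : IsRootOfUnity (-z) := by
  obtain ⟨n, hn, hzn⟩ := hz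
  refine ⟨2 * n, by positivity, ?_⟩
  rw [pow_mul, neg_sq, ← pow_mul, mul_comm, pow_mul, hzn, one_pow]

theorem IsRootOfUnity.conj {z : ℂ} (hz : IsRootOfUnity z) : IsRootOfUnity (conj z) := by
  obtain ⟨n, hn, hzn⟩ := hz
  exact ⟨n, hn, by rw [← map_pow, hzn, map_one]⟩

theorem IsRootOfUnity.isSumOfRootsOfUnity {z : ℂ} (hz : IsRootOfUnity z) :
    IsSumOfRootsOfUnity z :=
  ⟨1, fun _ => z, fun _ => hz, by simp⟩

theorem isSumOfRootsOfUnity_sum {ι : Type*} [Fintype ι] (f : ι → ℂ)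
    (hf : ∀ i, IsRootOfUnity (f i)) : IsSumOfRootsOfUnity (∑ i, f i) :=
  ⟨Fintype.card ι, f ∘ (Fintype.equivFin ι).symm, fun _ => hf _,
    (Equiv.sum_comp (Fintype.equivFin ι).symm f).symm⟩

theorem IsSumOfRootsOfUnity.add {z w : ℂ} (hz : IsSumOfRootsOfUnity z)
    (hw : IsSumOfRootsOfUnity w) : IsSumOfRootsOfUnity (z + w) := by
  obtain ⟨m, f, hf, rfl⟩ := hz
  obtain ⟨m', g, hg, rfl⟩ := hw
  have hsum := Fintype.sum_sum_type (Sum.elim f g)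
  simp only [Sum.elim_inl, Sum.elim_inr] at hsum
  exact hsum ▸ isSumOfRootsOfUnity_sum _ (Sum.rec hf hg)

theorem IsSumOfRootsOfUnity.mul {z w : ℂ} (hz : IsSumOfRootsOfUnity z)
    (hw : IsSumOfRootsOfUnity w) : IsSumOfRootsOfUnity (z * w) := by
  obtain ⟨m, f, hf, rfl⟩ := hz
  obtain ⟨m', g, hg, rfl⟩ := hw
  rw [Finset.sum_mul_sum, ← Fintype.sum_prod_type']
  exact isSumOfRootsOfUnity_sum _ fun p => (hf p.1).mul (hg p.2)

theorem IsSumOfRootsOfUnity.neg {z : ℂ} (hz : IsSumOfRootsOfUnity z) :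
    IsSumOfRootsOfUnity (-z) := by
  obtain ⟨m, f, hf, rfl⟩ := hz
  rw [← Finset.sum_neg_distrib]
  exact isSumOfRootsOfUnity_sum _ fun i => (hf i).neg

theorem IsSumOfRootsOfUnity.sub {z w : ℂ} (hz : IsSumOfRootsOfUnity z)
    (hw : IsSumOfRootsOfUnity w) : IsSumOfRootsOfUnity (z - w) :=
  sub_eq_add_neg z w ▸ hz.add hw.neg

theorem IsSumOfRootsOfUnity.conj {z : ℂ} (hz : IsSumOfRootsOfUnity z) :
    IsSumOfRootsOfUnity (conj z) := by
  obtain ⟨m, f, hf, rfl⟩ := hz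
  rw [map_sum]
  exact isSumOfRootsOfUnity_sum _ fun i => (hf i).conj

open NumberField

theorem NumberField.IsCMField.pow_eq_one_of_norm_eq_one {K : Type*} [Field K] [NumberField K]
    [IsCMField K] {x : K} (hx : IsIntegral ℤ x) (φ : K →+* ℂ) (hφx : ‖φ x‖ = 1) :
    ∃ n, 0 < n ∧ x ^ n = 1 := by
  have hmul_conj (ψ : K →+* ℂ) :
      ψ (x * IsCMField.complexConj K x) = (‖ψ x‖ : ℂ) ^ 2 := by
    rw [map_mul, IsCMField.complexEmbedding_complexConj, Complex.mul_conj']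
  have hunit : x * IsCMField.complexConj K x = 1 :=
    φ.injective <| by rw [hmul_conj, hφx, map_one]; norm_num
  obtain ⟨n, hn, hxn⟩ := Embeddings.pow_eq_one_of_norm_eq_one K ℂ hx fun ψ => by
    have h := hmul_conj ψ
    rw [hunit, map_one] at h
    exact (pow_eq_one_iff_of_nonneg (norm_nonneg _) two_ne_zero).mp (by exact_mod_cast h.symm)
  exact ⟨n, hn, hxn⟩

theorem IsCyclotomicExtension.exists_map_eq_of_pow_eq_one {N : ℕ} [NeZero N] {K : Type*} [Field K]
    [CharZero K] [IsCyclotomicExtension {N} ℚ K] (φ : K →+* ℂ) {z : ℂ} (hz : z ^ N = 1) :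
    ∃ w : K, w ^ N = 1 ∧ φ w = z := by
  have hζ := IsCyclotomicExtension.zeta_spec N ℚ K
  obtain ⟨e, -, he⟩ := (hζ.map_of_injective φ.injective).eq_pow_of_pow_eq_one hz
  refine ⟨IsCyclotomicExtension.zeta N ℚ K ^ e, ?_, by rw [map_pow, he]⟩
  rw [← pow_mul, mul_comm, pow_mul, hζ.pow_eq_one, one_pow]

theorem IsSumOfRootsOfUnity.isRootOfUnity_of_norm_eq_one {z : ℂ} (hz : IsSumOfRootsOfUnity z)
    (hnorm : ‖z‖ = 1) : IsRootOfUnity z := by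
  obtain ⟨m, f, hf, rfl⟩ := hz
  choose n hn hfn using hf
  -- the factor `3` makes `2 < N`, so that the cyclotomic field of level `N` is a CM field
  set N := 3 * ∏ i, n i with hNdef
  have hN : 2 < N := by
    have : 0 < ∏ i, n i := Finset.prod_pos fun i _ => hn i
    omega
  have hfN (i : Fin m) : f i ^ N = 1 := by
    obtain ⟨c, hc⟩ := (Finset.dvd_prod_of_mem n (Finset.mem_univ i)).mul_left 3
    rw [hNdef, hc, pow_mul, hfn, one_pow]
  have : NeZero N := ⟨by omega⟩
  have : NeZero (N : ℚ) := ⟨by exact_mod_cast NeZero.ne N⟩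
  let K := CyclotomicField N ℚ
  have : IsCyclotomicExtension {N} ℚ K := CyclotomicField.isCyclotomicExtension N ℚ
  have : IsCMField K := IsCyclotomicExtension.Rat.isCMField K (S := {N}) ⟨N, rfl, hN⟩
  let φ : K →+* ℂ := (IsAlgClosed.lift (R := ℚ) (M := ℂ)).toRingHom
  choose w hwN hφw using fun i => IsCyclotomicExtension.exists_map_eq_of_pow_eq_one φ (hfN i)
  have hint : IsIntegral ℤ (∑ i, w i) :=
    IsIntegral.sum _ fun i _ =>
      IsIntegral.of_pow (NeZero.pos N) (by rw [hwN]; exact isIntegral_one)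
  have hφsum : φ (∑ i, w i) = ∑ i, f i := by simp only [map_sum, hφw]
  obtain ⟨k, hk, hwk⟩ := IsCMField.pow_eq_one_of_norm_eq_one hint φ (hφsum ▸ hnorm)
  exact ⟨k, hk, by rw [← hφsum, ← map_pow, hwk, map_one]⟩

theorem trace_add_trace_mul_S (T : Matrix (Fin 3) (Fin 3) ℂ) (j : Fin 3) :
    T.trace + (T * S j).trace = 2 * T j j := by
  simp only [S, Matrix.mul_diagonal, Matrix.trace, Matrix.diag, Fin.sum_univ_three]
  fin_cases j <;> simp <;> ring

theorem Matrix.adjugate_eq_det_smul_star {n R : Type*} [Fintype n] [DecidableEq n] [CommRing R]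
    [StarRing R] {U : Matrix n n R} (hU : U ∈ Matrix.unitaryGroup n R) :
    U.adjugate = U.det • star U := calc
  U.adjugate = star U * U * U.adjugate := by rw [(Unitary.mem_iff.mp hU).1, Matrix.one_mul]
  _ = U.det • star U := by
    rw [Matrix.mul_assoc, Matrix.mul_adjugate, Matrix.mul_smul, Matrix.mul_one]

theorem Matrix.adjugate_fin_three_apply_self {R : Type*} [CommRing R]
    (A : Matrix (Fin 3) (Fin 3) R) {j k l : Fin 3} (hjk : j ≠ k) (hjl : j ≠ l) (hkl : k ≠ l) :
    A.adjugate j j = A k k * A l l - A k l * A l k := by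
  rw [Matrix.adjugate_fin_three]
  fin_cases j <;> fin_cases k <;> fin_cases l <;> simp_all <;> ring

theorem stmt10 (T : Matrix (Fin 3) (Fin 3) ℂ) (hT : T ∈ Matrix.unitaryGroup (Fin 3) ℂ)
    (htr : IsSumOfRootsOfUnity (Matrix.trace T))
    (htrS : ∀ j : Fin 3, IsSumOfRootsOfUnity (Matrix.trace (T * S j)))
    (hdet : IsRootOfUnity T.det)
    (k l : Fin 3) (hkl : k ≠ l)
    (habs : ‖T k l * T l k‖ = 1 / 4) :
    ∃ ξ : ℂ, IsRootOfUnity ξ ∧ T k l * T l k = ξ / 4 := by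
  obtain ⟨j, hjk, hjl⟩ : ∃ j, j ≠ k ∧ j ≠ l := by clear habs; revert k l; decide
  have hdiag (i : Fin 3) : IsSumOfRootsOfUnity (2 * T i i) :=
    trace_add_trace_mul_S T i ▸ htr.add (htrS i)
  have hminor : T k k * T l l - T k l * T l k = T.det * conj (T j j) := by
    rw [← T.adjugate_fin_three_apply_self hjk hjl hkl, Matrix.adjugate_eq_det_smul_star hT]
    simp [Matrix.star_apply]
  have hsum : IsSumOfRootsOfUnity (4 * (T k l * T l k)) := by
    have hd := hdet.isSumOfRootsOfUnity.mul (hdiag j).conj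
    convert ((hdiag k).mul (hdiag l)).sub (hd.add hd) using 1
    rw [map_mul, Complex.conj_ofNat]
    linear_combination -4 * hminor
  refine ⟨_, hsum.isRootOfUnity_of_norm_eq_one ?_, by ring⟩
  rw [norm_mul, habs]
  norm_num
end

section
/- For a 3×3 unitary matrix T, Re(T₁₁ T₂₂ T₁₂* T₂₁*) = (1/2)(1 − t₁₁ − t₂₂ − t₁₂ − t₂₁ + t₁₁t₂₂ + t₁₂t₂₁), where t_{ij} = |T_{ij}|². -/
/-!
Rows 0 and 1 of `T` are orthonormal, so `T₀₀ T₁₀* + T₀₁ T₁₁* = -T₀₂ T₁₂*`. Taking squared moduli,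
the left side expands to `t₀₀ t₁₀ + t₀₁ t₁₁ + 2 Re(T₀₀ T₁₁ T₀₁* T₁₀*)`, and the right side is
`t₀₂ t₁₂ = (1 - t₀₀ - t₀₁)(1 - t₁₀ - t₁₁)`.
-/

open ComplexConjugate

namespace Complex

theorem normSq_mul_conj_add_mul_conj (a b c d : ℂ) :
    normSq (a * conj c + b * conj d) =
      normSq a * normSq c + normSq b * normSq d + 2 * (a * d * conj b * conj c).re := by
  rw [normSq_add, normSq_mul, normSq_mul, normSq_conj, normSq_conj]
  congr 2
  simp only [map_mul, conj_conj]
  ring_nf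

theorem two_mul_re_mul_conj_of_orthonormal (u v : Fin 3 → ℂ)
    (hu : ∑ j, normSq (u j) = 1) (hv : ∑ j, normSq (v j) = 1)
    (huv : ∑ j, u j * conj (v j) = 0) :
    2 * (u 0 * v 1 * conj (u 1) * conj (v 0)).re =
      1 - normSq (u 0) - normSq (v 1) - normSq (u 1) - normSq (v 0)
        + normSq (u 0) * normSq (v 1) + normSq (u 1) * normSq (v 0) := by
  rw [Fin.sum_univ_three] at hu hv huv
  have hsq := congrArg normSq (eq_neg_of_add_eq_zero_left huv)
  rw [normSq_mul_conj_add_mul_conj, normSq_neg, normSq_mul, normSq_conj] at hsq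
  linear_combination hsq + normSq (v 2) * hu + (1 - normSq (u 0) - normSq (u 1)) * hv

end Complex

namespace Matrix

variable {n : Type*} [Fintype n] [DecidableEq n] {U : Matrix n n ℂ}

theorem sum_mul_conj_row_of_mem_unitaryGroup (hU : U ∈ unitaryGroup n ℂ) (i k : n) :
    ∑ j, U i j * conj (U k j) = if i = k then 1 else 0 := by
  simpa [mul_apply, one_apply] using congrFun (congrFun (mem_unitaryGroup_iff.mp hU) i) k

theorem sum_normSq_row_of_mem_unitaryGroup (hU : U ∈ unitaryGroup n ℂ) (i : n) :
    ∑ j, Complex.normSq (U i j) = 1 := by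
  have h := sum_mul_conj_row_of_mem_unitaryGroup hU i i
  rw [if_pos rfl] at h
  simp only [Complex.mul_conj] at h
  exact_mod_cast h

end Matrix

theorem stmt12 (T : Matrix (Fin 3) (Fin 3) ℂ) (hT : T ∈ Matrix.unitaryGroup (Fin 3) ℂ)
    (t : Matrix (Fin 3) (Fin 3) ℝ) (ht : ∀ i j, t i j = ‖T i j‖ ^ 2) :
    (T 0 0 * T 1 1 * (starRingEnd ℂ) (T 0 1) * (starRingEnd ℂ) (T 1 0)).re =
      (1 / 2) * (1 - t 0 0 - t 1 1 - t 0 1 - t 1 0 + t 0 0 * t 1 1 + t 0 1 * t 1 0) := by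
  have h := Complex.two_mul_re_mul_conj_of_orthonormal (T 0) (T 1)
    (Matrix.sum_normSq_row_of_mem_unitaryGroup hT 0)
    (Matrix.sum_normSq_row_of_mem_unitaryGroup hT 1)
    (by simpa using Matrix.sum_mul_conj_row_of_mem_unitaryGroup hT 0 1)
  simp only [ht, Complex.sq_norm]
  linarith
end
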